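/- arXiv:1004.1298 — 11 statements merged into one kernel-verified Lean document; each statement's English description precedes it below -/
import Mathlib

section
/- If M is a simple NFA, then the DFA obtained from M by the subset construction, after removing states inaccessible from the start state, is a minimal DFA for the language of M. -/
open List Set

/-- The language of a state `q` of an NFA: strings leading from `q` to an accepting state. -/
def stateLang {α σ : Type} (M : NFA α σ) (q : σ) : Set (List α) :=
  {s | (M.evalFrom {q} s ∩ M.accept).Nonempty}

/-- A state is accessible if it is reachable from some start state on some string. -/
def Accessible {α σ : Type} (M : NFA α σ) (q : σ) : Prop := ∃ s : List α, q ∈ M.eval s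

/-- A simple NFA: all states accessible, all state languages nonempty and pairwise disjoint. -/
def IsSimple {α σ : Type} (M : NFA α σ) : Prop :=
  (∀ q : σ, Accessible M q) ∧ (∀ q : σ, (stateLang M q).Nonempty) ∧
  (∀ p q : σ, p ≠ q → Disjoint (stateLang M p) (stateLang M q))

/-- The automaton obtained by adding self-transitions (on every character) to all start states. -/
def loopNFA {α σ : Type} (M : NFA α σ) : NFA α σ where
  step q a := {x | x = q ∧ q ∈ M.start} ∪ M.step q a
  start := M.start
  accept := M.accept

/-
The subset automaton reaches the state `M.eval s` on `s`, and the strings accepted from there form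
the left quotient of `L(M)` by `s`, namely `⋃ q ∈ M.eval s, L(q)`. Since the `L(q)` are nonempty
and pairwise disjoint, this union determines `M.eval s`, so the accessible subsets correspond
bijectively to the left quotients of `L(M)`. Any DFA for `L(M)` has at least that many states,
because the left quotient by `s` only depends on the state the DFA reaches on `s`.
-/

namespace NFA

open Function

variable {α σ : Type} (M : NFA α σ)

theorem stateLang_eq_acceptsFrom (q : σ) : stateLang M q = M.acceptsFrom {q} := by
  ext s
  exact exists_congr fun _ => and_comm

theorem acceptsFrom_eq_biUnion_stateLang (S : Set σ) :
    M.acceptsFrom S = ⋃ q ∈ S, stateLang M q := by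
  simp only [stateLang_eq_acceptsFrom, ← acceptsFrom_iUnion₂, biUnion_of_singleton]

theorem acceptsFrom_injective (hne : ∀ q, (stateLang M q).Nonempty)
    (hdisj : Pairwise (_root_.Disjoint on stateLang M)) : Injective M.acceptsFrom := by
  rw [funext M.acceptsFrom_eq_biUnion_stateLang]
  exact hdisj.biUnion_injective hne

theorem leftQuotient_accepts : M.accepts.leftQuotient = M.acceptsFrom ∘ M.eval :=
  funext fun _ => ext fun _ => append_mem_acceptsFrom M

theorem ncard_range_eval_eq_of_injective (hinj : Injective M.acceptsFrom) :
    (range M.eval).ncard = (range M.accepts.leftQuotient).ncard := by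
  rw [leftQuotient_accepts, range_comp, ncard_image_of_injective _ hinj]

end NFA

theorem DFA.ncard_range_leftQuotient_accepts_le {α σ : Type} [Finite σ] (N : DFA α σ) :
    (range N.accepts.leftQuotient).ncard ≤ Nat.card σ := by
  rw [Language.leftQuotient_accepts, range_comp]
  exact (ncard_image_le (toFinite _)).trans (ncard_le_card _)

theorem subsetConstruction_of_simple_is_minimal_general {α σ : Type}
    (M : NFA α σ) (hM : IsSimple M) :
    M.toDFA.accepts = M.accepts ∧
    ∀ (σ' : Type) [Fintype σ'] (N : DFA α σ'), N.accepts = M.accepts →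
      {S : Set σ | ∃ s : List α, M.toDFA.evalFrom M.toDFA.start s = S}.ncard ≤
        Fintype.card σ' := by
  obtain ⟨-, hne, hdisj⟩ := hM
  refine ⟨M.toDFA_correct, fun σ' _ N hN => ?_⟩
  calc {S : Set σ | ∃ s : List α, M.toDFA.evalFrom M.toDFA.start s = S}.ncard
      = (range M.eval).ncard := rfl
    _ = (range M.accepts.leftQuotient).ncard :=
      M.ncard_range_eval_eq_of_injective (M.acceptsFrom_injective hne fun p q => hdisj p q)
    _ = (range N.accepts.leftQuotient).ncard := by rw [hN]
    _ ≤ Nat.card σ' := N.ncard_range_leftQuotient_accepts_le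
    _ = Fintype.card σ' := Nat.card_eq_fintype_card

/-- The subset-construction DFA of a simple NFA, after removing inaccessible states,
is a minimal DFA for the language of the NFA: it recognizes the same language and no
DFA recognizing this language has fewer states than it has accessible states. -/
theorem subsetConstruction_of_simple_is_minimal {α σ : Type} [Fintype σ]
    (M : NFA α σ) (hM : IsSimple M) :
    M.toDFA.accepts = M.accepts ∧
    ∀ (σ' : Type) [Fintype σ'] (N : DFA α σ'), N.accepts = M.accepts →
      {S : Set σ | ∃ s : List α, M.toDFA.evalFrom M.toDFA.start s = S}.ncard ≤
        Fintype.card σ' :=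
  subsetConstruction_of_simple_is_minimal_general M hM
end

section
/- Let M be a simple NFA such that no start state is reachable via a single transition from any other state (i.e., there are no σ ∈ Σ, q_α ∈ Q_α, q ∈ Q with q ≠ q_α and q_α ∈ Δ(q, σ)). Then the automaton M_⟲ obtained by adding a self-transition on every character to each start state is also simple. -/
/-!
Since no start state has an incoming transition from another state, a run of `M_⟲` that leaves
a start state never returns to one, so from then on it is a run of `M`. Hence the language of a
non-start state is unchanged, and a word in the new language of a start state `p` has a suffix
in the old language of `p`. If a word lay in the new languages of `p ≠ q`, compare the two
suffixes: the longer one, say in `L(q)`, is `v ++ t` with `t` in `L(p)`, and disjointness of the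
old languages forces `M` to reach `p` from `q` on `v`. Either `p` is a start state, so no
transition enters it and `p = q`, or the suffix `t` is the whole word and `v` is empty.
-/

open List Set

namespace NFA

variable {α σ : Type*}

theorem evalFrom_subset_evalFrom {M N : NFA α σ} (hMN : ∀ q a, M.step q a ⊆ N.step q a)
    {S T : Set σ} (hST : S ⊆ T) (x : List α) : M.evalFrom S x ⊆ N.evalFrom T x := by
  induction x generalizing S T with
  | nil => exact hST
  | cons a x ih =>
    refine ih fun q hq => ?_
    obtain ⟨r, hr, hq⟩ := mem_stepSet.1 hq
    exact mem_stepSet.2 ⟨r, hST hr, hMN r a hq⟩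

theorem evalFrom_eq_of_step_eqOn {M N : NFA α σ} {T : Set σ}
    (hMN : ∀ q ∈ T, ∀ a, M.step q a = N.step q a) (hT : ∀ q ∈ T, ∀ a, M.step q a ⊆ T)
    {S : Set σ} (hS : S ⊆ T) (x : List α) : M.evalFrom S x = N.evalFrom S x := by
  induction x generalizing S with
  | nil => rfl
  | cons a x ih =>
    have hstep : M.stepSet S a = N.stepSet S a := by
      ext q
      simp only [mem_stepSet]
      exact exists_congr fun r => and_congr_right fun hr => by rw [hMN r (hS hr)]
    have hstepT : M.stepSet S a ⊆ T := fun q hq => by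
      obtain ⟨r, hr, hq⟩ := mem_stepSet.1 hq
      exact hT r (hS hr) a hq
    rw [evalFrom_cons, evalFrom_cons, ih hstepT, hstep]

theorem mem_of_mem_evalFrom {M : NFA α σ} {p : σ} (hp : ∀ q a, p ∈ M.step q a → q = p)
    {S : Set σ} {x : List α} (h : p ∈ M.evalFrom S x) : p ∈ S := by
  induction x generalizing S with
  | nil => exact h
  | cons a x ih =>
    obtain ⟨q, hq, hpq⟩ := mem_stepSet.1 (ih h)
    exact hp q a hpq ▸ hq

end NFA

variable {α σ : Type} {M : NFA α σ}

theorem cons_mem_stateLang_of_mem_step {p r : σ} {a : α} {x : List α} (hr : r ∈ M.step p a)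
    (hx : x ∈ stateLang M r) : a :: x ∈ stateLang M p :=
  Set.Nonempty.mono (inter_subset_inter_left _ <|
    NFA.evalFrom_subset_evalFrom (M := M) (T := M.stepSet {p} a) (fun _ _ => subset_rfl)
      (singleton_subset_iff.2 (NFA.mem_stepSet.2 ⟨p, rfl, hr⟩)) x) hx

theorem mem_evalFrom_of_append_mem_stateLang
    (hdisj : ∀ p q : σ, p ≠ q → Disjoint (stateLang M p) (stateLang M q)) {p q : σ}
    {v t : List α} (ht : t ∈ stateLang M p) (hvt : v ++ t ∈ stateLang M q) :
    p ∈ M.evalFrom {q} v := by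
  obtain ⟨y, hy, hyacc⟩ := hvt
  rw [NFA.evalFrom_append, NFA.mem_evalFrom_iff_exists] at hy
  obtain ⟨r, hr, hy⟩ := hy
  obtain rfl : p = r := by
    by_contra hpr
    exact Set.disjoint_left.1 (hdisj p r hpr) ht ⟨y, hy, hyacc⟩
  exact hr

theorem Accessible.loopNFA {q : σ} (h : Accessible M q) : Accessible (loopNFA M) q :=
  h.imp fun s => (NFA.evalFrom_subset_evalFrom (fun _ _ => subset_union_right) subset_rfl s ·)

theorem stateLang_subset_stateLang_loopNFA (q : σ) : stateLang M q ⊆ stateLang (loopNFA M) q :=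
  fun _ => Set.Nonempty.mono (inter_subset_inter_left _ <|
    NFA.evalFrom_subset_evalFrom (fun _ _ => subset_union_right) subset_rfl _)

section NoIncoming

variable (hni : ∀ p ∈ M.start, ∀ q a, p ∈ M.step q a → q = p)
include hni

theorem stateLang_loopNFA_of_not_mem_start {p : σ} (hp : p ∉ M.start) :
    stateLang (loopNFA M) p = stateLang M p := by
  have hsteps : ∀ q ∈ M.startᶜ, ∀ a, M.step q a = (loopNFA M).step q a := fun q hq a =>
    (union_eq_right.2 fun _ hx => absurd hx.2 hq).symm
  have hclosed : ∀ q ∈ M.startᶜ, ∀ a, M.step q a ⊆ M.startᶜ :=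
    fun q hq a x hx hxs => hq (hni x hxs q a hx ▸ hxs)
  ext s
  show ((loopNFA M).evalFrom {p} s ∩ M.accept).Nonempty ↔ (M.evalFrom {p} s ∩ M.accept).Nonempty
  rw [NFA.evalFrom_eq_of_step_eqOn hsteps hclosed (singleton_subset_iff.2 hp) s]

theorem exists_isSuffix_mem_stateLang {p : σ} {s : List α} (hs : s ∈ stateLang (loopNFA M) p) :
    ∃ t ∈ stateLang M p, t <:+ s ∧ (p ∈ M.start ∨ t = s) := by
  by_cases hp : p ∈ M.start
  swap
  · exact ⟨s, stateLang_loopNFA_of_not_mem_start hni hp ▸ hs, suffix_refl s, Or.inr rfl⟩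
  induction s with
  | nil => exact ⟨[], hs, suffix_refl [], Or.inl hp⟩
  | cons a s ih =>
    obtain ⟨y, hy, hyacc⟩ := hs
    rw [NFA.evalFrom_cons, NFA.stepSet_singleton, NFA.mem_evalFrom_iff_exists] at hy
    obtain ⟨r, hr, hy⟩ := hy
    by_cases hrs : r ∈ M.start
    · obtain rfl : r = p := by
        rcases hr with ⟨rfl, -⟩ | hr
        exacts [rfl, (hni r hrs p a hr).symm]
      obtain ⟨t, ht, hts, -⟩ := ih ⟨y, hy, hyacc⟩
      exact ⟨t, ht, hts.trans (suffix_cons a s), Or.inl hp⟩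
    · have hr : r ∈ M.step p a := hr.resolve_left fun h => hrs (h.1 ▸ hp)
      have hsr : s ∈ stateLang M r :=
        stateLang_loopNFA_of_not_mem_start hni hrs ▸ ⟨y, hy, hyacc⟩
      exact ⟨a :: s, cons_mem_stateLang_of_mem_step hr hsr, suffix_refl _, Or.inr rfl⟩

theorem eq_of_isSuffix_mem_stateLang
    (hdisj : ∀ p q : σ, p ≠ q → Disjoint (stateLang M p) (stateLang M q)) {p q : σ}
    {t t' s : List α} (ht : t ∈ stateLang M p) (ht' : t' ∈ stateLang M q) (htt' : t <:+ t')
    (ht's : t' <:+ s) (hp : p ∈ M.start ∨ t = s) : p = q := by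
  obtain ⟨v, rfl⟩ := htt'
  have hpq : p ∈ M.evalFrom {q} v := mem_evalFrom_of_append_mem_stateLang hdisj ht ht'
  rcases hp with hp | rfl
  · exact NFA.mem_of_mem_evalFrom (hni p hp) hpq
  · obtain rfl : v = [] := by
      simpa using ht's.length_le
    exact hpq

end NoIncoming

/-- If in a simple NFA no start state can be reached by a single transition from any
other state, then the automaton with self-transitions added to the start states is
also simple. -/
theorem loopNFA_simple_of_no_incoming {α σ : Type} (M : NFA α σ) (hM : IsSimple M)
    (h : ¬ ∃ (a : α) (qa q : σ), qa ∈ M.start ∧ q ≠ qa ∧ qa ∈ M.step q a) :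
    IsSimple (loopNFA M) := by
  have hni : ∀ p ∈ M.start, ∀ q a, p ∈ M.step q a → q = p := fun p hp q a hq =>
    by_contra fun hne => h ⟨a, p, q, hp, hne, hq⟩
  obtain ⟨hacc, hne, hdisj⟩ := hM
  refine ⟨fun q => (hacc q).loopNFA, fun q => (hne q).mono (stateLang_subset_stateLang_loopNFA q),
    fun p q hpq => Set.disjoint_left.2 fun s hsp hsq => hpq ?_⟩
  obtain ⟨t, ht, hts, hp⟩ := exists_isSuffix_mem_stateLang hni hsp
  obtain ⟨t', ht', ht's, hq⟩ := exists_isSuffix_mem_stateLang hni hsq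
  rcases suffix_or_suffix_of_suffix hts ht's with htt' | ht't
  · exact eq_of_isSuffix_mem_stateLang hni hdisj ht ht' htt' ht's hp
  · exact (eq_of_isSuffix_mem_stateLang hni hdisj ht' ht ht't hts hq).symm
end

section
/- Let M be a simple NFA. If the automaton M_⟲ obtained by adding self-transitions on all characters to every start state is simple, then no start state of M is reachable from any other state: there do not exist σ ∈ Σ, q_α ∈ Q_α, q ∈ Q with q ≠ q_α and q_α ∈ Δ(q, σ). -/
open List Set

theorem cons_mem_stateLang_of_mem_step_s4 {α σ : Type} (M : NFA α σ) {p q : σ} {a : α}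
    {s : List α} (hstep : p ∈ M.step q a) (hs : s ∈ stateLang M p) :
    a :: s ∈ stateLang M q := by
  obtain ⟨f, hf, hacc⟩ := hs
  refine ⟨f, ?_, hacc⟩
  rw [NFA.evalFrom_cons, NFA.stepSet_singleton, NFA.mem_evalFrom_iff_exists]
  exact ⟨p, hstep, hf⟩

theorem mem_loopNFA_step_self {α σ : Type} (M : NFA α σ) {q : σ} (hq : q ∈ M.start) (a : α) :
    q ∈ (loopNFA M).step q a :=
  Or.inl ⟨rfl, hq⟩

theorem mem_loopNFA_step_of_mem_step {α σ : Type} (M : NFA α σ) {p q : σ} {a : α}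
    (hstep : p ∈ M.step q a) : p ∈ (loopNFA M).step q a :=
  Or.inr hstep

theorem no_incoming_of_loopNFA_simple_general {α σ : Type} (M : NFA α σ)
    (h : IsSimple (loopNFA M)) :
    ¬ ∃ (a : α) (qa q : σ), qa ∈ M.start ∧ q ≠ qa ∧ qa ∈ M.step q a := by
  rintro ⟨a, qa, q, hstart, hne, hstep⟩
  obtain ⟨s, hs⟩ := h.2.1 qa
  have from_q : a :: s ∈ stateLang (loopNFA M) q :=
    cons_mem_stateLang_of_mem_step_s4 _ (mem_loopNFA_step_of_mem_step M hstep) hs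
  have from_qa : a :: s ∈ stateLang (loopNFA M) qa :=
    cons_mem_stateLang_of_mem_step_s4 _ (mem_loopNFA_step_self M hstart a) hs
  exact Set.disjoint_left.mp (h.2.2 q qa hne) from_q from_qa

/-- If for a simple NFA the automaton with self-transitions added to all start states
is again simple, then no start state is reachable by a single transition from any
other state. -/
theorem no_incoming_of_loopNFA_simple {α σ : Type} (M : NFA α σ) (hM : IsSimple M)
    (h : IsSimple (loopNFA M)) :
    ¬ ∃ (a : α) (qa q : σ), qa ∈ M.start ∧ q ≠ qa ∧ qa ∈ M.step q a :=
  no_incoming_of_loopNFA_simple_general M h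
end

section
/- In a simple NFA, if no state other than a start state has a transition into a start state, then for every non-start state p, the language of p in the self-loop-augmented automaton M_⟲ equals the language of p in M. -/
open List Set

namespace NFA

variable {α σ : Type} (M : NFA α σ)

theorem loopNFA_step_of_not_mem_start {q : σ} (hq : q ∉ M.start) (a : α) :
    (loopNFA M).step q a = M.step q a := by
  simp [loopNFA, hq]

theorem loopNFA_stepSet_of_disjoint_start {S : Set σ} (hS : Disjoint S M.start) (a : α) :
    (loopNFA M).stepSet S a = M.stepSet S a := by
  ext x
  simp only [mem_stepSet]
  refine exists_congr fun q => and_congr_right fun hq => ?_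
  rw [loopNFA_step_of_not_mem_start M (Set.disjoint_left.mp hS hq)]

theorem stepSet_disjoint_start
    (h : ∀ (a : α) (qa q : σ), qa ∈ M.start → q ≠ qa → qa ∉ M.step q a)
    {S : Set σ} (hS : Disjoint S M.start) (a : α) : Disjoint (M.stepSet S a) M.start := by
  refine Set.disjoint_left.mpr fun x hx hx_start => ?_
  obtain ⟨q, hq, hqx⟩ := M.mem_stepSet.mp hx
  have hq_ne : q ≠ x := by
    rintro rfl
    exact Set.disjoint_left.mp hS hq hx_start
  exact h a x q hx_start hq_ne hqx

theorem loopNFA_evalFrom_of_disjoint_start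
    (h : ∀ (a : α) (qa q : σ), qa ∈ M.start → q ≠ qa → qa ∉ M.step q a)
    {S : Set σ} (hS : Disjoint S M.start) (s : List α) :
    (loopNFA M).evalFrom S s = M.evalFrom S s := by
  induction s generalizing S with
  | nil => rfl
  | cons a s ih =>
    rw [evalFrom_cons, evalFrom_cons, loopNFA_stepSet_of_disjoint_start M hS,
      ih (M.stepSet_disjoint_start h hS a)]

end NFA

theorem stateLang_loopNFA_eq_of_not_start_general {α σ : Type} (M : NFA α σ)
    (h : ∀ (a : α) (qa q : σ), qa ∈ M.start → q ≠ qa → qa ∉ M.step q a) :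
    ∀ p : σ, p ∉ M.start → stateLang (loopNFA M) p = stateLang M p := by
  intro p hp
  ext s
  have hp_disjoint : Disjoint ({p} : Set σ) M.start := Set.disjoint_singleton_left.mpr hp
  simp only [stateLang, Set.mem_ofPred_eq, M.loopNFA_evalFrom_of_disjoint_start h hp_disjoint]
  rfl

/-- In a simple NFA where no start state has an incoming transition from any other
state, the language of every non-start state is unchanged by adding self-transitions
to the start states. -/
theorem stateLang_loopNFA_eq_of_not_start {α σ : Type} (M : NFA α σ) (hM : IsSimple M)
    (h : ∀ (a : α) (qa q : σ), qa ∈ M.start → q ≠ qa → qa ∉ M.step q a) :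
    ∀ p : σ, p ∉ M.start → stateLang (loopNFA M) p = stateLang M p :=
  stateLang_loopNFA_eq_of_not_start_general M h
end

section
/- For any generalized string g, the chain NFA constructed from g (states 0..|g|, start state 0, accepting state |g|, transition from q to q+1 on σ iff σ ∈ g[q+1]) is a simple NFA: all states are accessible, every state's language is non-empty, and the languages of distinct states are pairwise disjoint. -/
open List Set

/-- The chain NFA of a generalized string `g` (a list of nonempty subsets of the
alphabet): states `0..|g|`, start state `0`, accepting state `|g|`, and a transition
from `q` to `q+1` on `a` iff `a ∈ g[q+1]`. -/
def chainNFA {α : Type} (g : List (Set α)) : NFA α (Fin (g.length + 1)) where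
  step q a := {q' | ∃ h : (q : ℕ) < g.length, a ∈ g.get ⟨q, h⟩ ∧ (q' : ℕ) = (q : ℕ) + 1}
  start := {0}
  accept := {Fin.last g.length}


/-! Every transition of the chain NFA raises the state by exactly one, so a word `w` leads
from `p` only to `p + |w|`; languages of distinct states are therefore disjoint, since their
words reach the accepting state `|g|` with different lengths. Conversely, because every letter
set of `g` is nonempty, one can walk from any state to any later one letter by letter. -/

namespace chainNFA

variable {α : Type} {g : List (Set α)}

theorem succ_mem_step {i : Fin g.length} {a : α} (ha : a ∈ g.get i) :
    i.succ ∈ (chainNFA g).step i.castSucc a :=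
  ⟨i.isLt, ha, rfl⟩

theorem val_eq_of_mem_evalFrom {p r : Fin (g.length + 1)} {w : List α}
    (hr : r ∈ (chainNFA g).evalFrom {p} w) : (r : ℕ) = p + w.length := by
  induction w using List.reverseRecOn generalizing r with
  | nil => rw [NFA.evalFrom_nil, Set.mem_singleton_iff] at hr; simp [hr]
  | append_singleton w a ih =>
    rw [NFA.evalFrom_append, NFA.evalFrom_singleton, NFA.mem_stepSet] at hr
    obtain ⟨t, ht, -, -, hrt⟩ := hr
    rw [hrt, ih ht, List.length_append, List.length_singleton, Nat.add_assoc]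

theorem exists_mem_evalFrom (hg : ∀ S ∈ g, S.Nonempty) {p q : Fin (g.length + 1)}
    (hpq : p ≤ q) : ∃ w : List α, q ∈ (chainNFA g).evalFrom {p} w := by
  induction q using Fin.induction with
  | zero => exact ⟨[], by simpa using (le_antisymm hpq (Fin.zero_le p)).symm⟩
  | succ i ih =>
    by_cases hpi : p ≤ i.castSucc
    · obtain ⟨w, hw⟩ := ih hpi
      obtain ⟨a, ha⟩ := hg _ (List.get_mem g i)
      refine ⟨w ++ [a], ?_⟩
      rw [NFA.evalFrom_append, NFA.evalFrom_singleton]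
      exact NFA.mem_stepSet.2 ⟨_, hw, succ_mem_step ha⟩
    · have hp : p = i.succ :=
        le_antisymm hpq (Fin.castSucc_lt_iff_succ_le.1 (not_le.1 hpi))
      exact ⟨[], by simp [hp]⟩

end chainNFA

/-- The chain NFA of a generalized string is simple. -/
theorem chainNFA_simple {α : Type} (g : List (Set α)) (hg : ∀ S ∈ g, S.Nonempty) :
    IsSimple (chainNFA g) := by
  refine ⟨fun q => ?_, fun q => ?_, fun p q hpq => ?_⟩
  · exact chainNFA.exists_mem_evalFrom hg (Fin.zero_le q)
  · obtain ⟨w, hw⟩ := chainNFA.exists_mem_evalFrom hg (Fin.le_last q)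
    exact ⟨w, Fin.last _, hw, rfl⟩
  · refine Set.disjoint_left.2 fun w ⟨r, hr, hrl⟩ ⟨r', hr', hrl'⟩ => hpq (Fin.ext ?_)
    have h := chainNFA.val_eq_of_mem_evalFrom hr
    have h' := chainNFA.val_eq_of_mem_evalFrom hr'
    rw [Set.mem_singleton_iff.1 hrl] at h
    rw [Set.mem_singleton_iff.1 hrl'] at h'
    omega
end

section
/- In the chain NFA built from a generalized string g, the language of state i consists exactly of the strings of length |g| − i matching the suffix of g starting at position i+1; in particular, all strings in L(i) have length |g| − i, so languages of distinct states are disjoint. -/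
open List Set

namespace NFA

variable {α σ : Type} (M : NFA α σ)

theorem nil_mem_stateLang {q : σ} : [] ∈ stateLang M q ↔ q ∈ M.accept := by
  simp [stateLang, evalFrom_nil]

theorem cons_mem_stateLang {q : σ} {a : α} {s : List α} :
    a :: s ∈ stateLang M q ↔ ∃ q' ∈ M.step q a, s ∈ stateLang M q' := by
  simp only [stateLang, Set.mem_ofPred, evalFrom_cons, stepSet_singleton,
    evalFrom_eq_biUnion_singleton _ (M.step q a), Set.iUnion₂_inter, Set.nonempty_biUnion]

end NFA

theorem mem_stateLang_chainNFA_iff {α : Type} (g : List (Set α)) (i : Fin (g.length + 1))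
    (s : List α) : s ∈ stateLang (chainNFA g) i ↔ Forall₂ (· ∈ ·) s (g.drop i) := by
  induction s generalizing i with
  | nil =>
    rw [NFA.nil_mem_stateLang, forall₂_nil_left_iff, drop_eq_nil_iff]
    simp only [chainNFA, Set.mem_singleton_iff, Fin.ext_iff, Fin.val_last]
    omega
  | cons a s ih =>
    rw [NFA.cons_mem_stateLang]
    by_cases hi : (i : ℕ) < g.length
    · rw [drop_eq_getElem_cons hi, forall₂_cons, ← ih ⟨i + 1, by omega⟩]
      constructor
      · rintro ⟨j, ⟨_, ha, hj⟩, hs⟩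
        exact ⟨ha, (Fin.ext hj : j = ⟨i + 1, _⟩) ▸ hs⟩
      · rintro ⟨ha, hs⟩
        exact ⟨_, ⟨hi, ha, rfl⟩, hs⟩
    · rw [drop_eq_nil_of_le (by omega)]
      simp [chainNFA, hi]

theorem length_of_mem_stateLang_chainNFA {α : Type} {g : List (Set α)}
    {i : Fin (g.length + 1)} {s : List α} (hs : s ∈ stateLang (chainNFA g) i) :
    s.length = g.length - i := by
  simpa using ((mem_stateLang_chainNFA_iff g i s).1 hs).length_eq

theorem chainNFA_stateLang_general {α : Type} (g : List (Set α)) :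
    (∀ i : Fin (g.length + 1),
      stateLang (chainNFA g) i = {s : List α | List.Forall₂ (· ∈ ·) s (g.drop (i : ℕ))}) ∧
    (∀ i : Fin (g.length + 1), ∀ s ∈ stateLang (chainNFA g) i,
      s.length = g.length - (i : ℕ)) ∧
    (∀ i j : Fin (g.length + 1), i ≠ j →
      Disjoint (stateLang (chainNFA g) i) (stateLang (chainNFA g) j)) := by
  refine ⟨fun i => Set.ext (mem_stateLang_chainNFA_iff g i),
    fun i s => length_of_mem_stateLang_chainNFA, fun i j hij => ?_⟩
  refine Set.disjoint_left.2 fun s hsi hsj => hij (Fin.ext ?_)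
  have hi := length_of_mem_stateLang_chainNFA hsi
  have hj := length_of_mem_stateLang_chainNFA hsj
  -- `|g| - i` determines `i` because `i ≤ |g|`, so the truncated subtraction is harmless
  omega

/-- In the chain NFA of a generalized string `g`, the language of state `i` is the
set of strings matching the suffix of `g` starting at position `i + 1`; in
particular every string in that language has length `|g| - i`, so the languages of
distinct states are disjoint. -/
theorem chainNFA_stateLang {α : Type} (g : List (Set α)) (hg : ∀ S ∈ g, S.Nonempty) :
    (∀ i : Fin (g.length + 1),
      stateLang (chainNFA g) i = {s : List α | List.Forall₂ (· ∈ ·) s (g.drop (i : ℕ))}) ∧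
    (∀ i : Fin (g.length + 1), ∀ s ∈ stateLang (chainNFA g) i,
      s.length = g.length - (i : ℕ)) ∧
    (∀ i j : Fin (g.length + 1), i ≠ j →
      Disjoint (stateLang (chainNFA g) i) (stateLang (chainNFA g) j)) :=
  chainNFA_stateLang_general g
end

section
/- Let G be a finite set of generalized strings of equal length ℓ. The level-wise NFA constructed from G accepts a string s if and only if there exists g ∈ G with s ◁ g. -/
open List Set

/-- The parent of a state `(H, k)` under character `a`:
`Parent ((H, k), a) = ({h ∈ H | a ∈ h[k]}, k - 1)`. -/
def Parent {α : Type} (p : Set (List (Set α)) × ℕ) (a : α) : Set (List (Set α)) × ℕ :=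
  ({h ∈ p.1 | a ∈ h.getD (p.2 - 1) ∅}, p.2 - 1)

/-- `LevelAux G ℓ j` is the level `Q_{ℓ - j}`: `Q_ℓ = {(G, ℓ)}` and each higher level
consists of the nonempty parents of states of the level below. -/
def LevelAux {α : Type} (G : Set (List (Set α))) (ℓ : ℕ) : ℕ → Set (Set (List (Set α)) × ℕ)
  | 0 => {(G, ℓ)}
  | j + 1 => {p | p.1.Nonempty ∧ ∃ q ∈ LevelAux G ℓ j, ∃ a : α, Parent q a = p}

/-- The level-wise NFA built from a set `G` of generalized strings of length `ℓ`:
transitions go from a state to those states of the next level whose parent it is,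
the start states are the top level `Q_0` and the accepting state is `(G, ℓ)`. -/
def levelNFA {α : Type} (G : Set (List (Set α))) (ℓ : ℕ) :
    NFA α (Set (List (Set α)) × ℕ) where
  step p a := {q | p.2 < ℓ ∧ q ∈ LevelAux G ℓ (ℓ - (p.2 + 1)) ∧ Parent q a = p}
  start := LevelAux G ℓ ℓ
  accept := {(G, ℓ)}

/-!
A state `(H, k)` of level `k` is determined by a string `t` of length `ℓ - k`: `H` is the set of
`g ∈ G` that `t` matches from position `k` on, and its parent under `a` is the state of `a :: t`.
So a run on `s` ending in `(G, ℓ)` must start in the state of `s` at position `0`, and this is a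
start state exactly when it is nonempty, i.e. when some `g ∈ G` matches `s`.
-/

-- Past the end of `g` both sides fail, since `getD` defaults to `∅`.
theorem List.forall₂_mem_cons_drop_iff {α : Type} {a : α} {t : List α} {g : List (Set α)}
    {k : ℕ} :
    Forall₂ (· ∈ ·) (a :: t) (g.drop k) ↔
      a ∈ g.getD k ∅ ∧ Forall₂ (· ∈ ·) t (g.drop (k + 1)) := by
  induction g generalizing k with
  | nil => simp
  | cons b g ih => cases k <;> simp [ih]

theorem NFA.mem_acceptsFrom_iff_exists {α σ : Type} {M : NFA α σ} {S : Set σ} {x : List α} :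
    x ∈ M.acceptsFrom S ↔ ∃ q ∈ S, x ∈ M.acceptsFrom {q} := by
  simp only [NFA.mem_acceptsFrom, NFA.mem_evalFrom_iff_exists (S := S)]
  grind

section LevelNFA

variable {α : Type} {G : Set (List (Set α))} {ℓ : ℕ}

/-- Every state of `levelNFA G ℓ` has this form (`mem_levelAux_iff`). -/
def matchState (G : Set (List (Set α))) (k : ℕ) (t : List α) : Set (List (Set α)) × ℕ :=
  ({g ∈ G | Forall₂ (· ∈ ·) t (g.drop k)}, k)

theorem parent_fst_subset (p : Set (List (Set α)) × ℕ) (a : α) : (Parent p a).1 ⊆ p.1 :=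
  sep_subset _ _

theorem parent_matchState (k : ℕ) (t : List α) (a : α) :
    Parent (matchState G (k + 1) t) a = matchState G k (a :: t) := by
  ext g
  · simp only [Parent, matchState, Nat.add_sub_cancel, mem_ofPred_eq,
      List.forall₂_mem_cons_drop_iff]
    tauto
  · rfl

theorem matchState_nil (hlen : ∀ g ∈ G, g.length = ℓ) : matchState G ℓ [] = (G, ℓ) := by
  ext g
  · simp +contextual [matchState, hlen]
  · rfl

theorem mem_levelAux_iff (hG : G.Nonempty) (hlen : ∀ g ∈ G, g.length = ℓ) {k : ℕ}
    (hk : k ≤ ℓ) {q : Set (List (Set α)) × ℕ} :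
    q ∈ LevelAux G ℓ (ℓ - k) ↔
      ∃ t : List α, k + t.length = ℓ ∧ q = matchState G k t ∧ q.1.Nonempty := by
  induction h : ℓ - k generalizing k q with
  | zero =>
    obtain rfl : k = ℓ := by omega
    simp only [LevelAux, mem_singleton_iff, List.length_eq_zero_iff, add_eq_left]
    constructor
    · rintro rfl
      exact ⟨[], rfl, (matchState_nil hlen).symm, hG⟩
    · rintro ⟨t, rfl, rfl, -⟩
      exact matchState_nil hlen
  | succ j ih =>
    have hk' : k + 1 ≤ ℓ := by omega
    have hstep : q ∈ LevelAux G ℓ (j + 1) ↔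
        q.1.Nonempty ∧ ∃ p ∈ LevelAux G ℓ j, ∃ a, Parent p a = q := Iff.rfl
    simp only [hstep, ih hk' (by omega)]
    constructor
    · rintro ⟨hq, p, ⟨t, ht, rfl, -⟩, a, rfl⟩
      exact ⟨a :: t, by simp; omega, parent_matchState k t a, hq⟩
    · rintro ⟨_ | ⟨a, t⟩, ht, rfl, hq⟩
      · simp at ht; omega
      · rw [← parent_matchState] at hq ⊢
        exact ⟨hq, _, ⟨t, by simp at ht; omega, rfl, hq.mono (parent_fst_subset _ _)⟩, a, rfl⟩

theorem mem_acceptsFrom_levelNFA_iff (hG : G.Nonempty) (hlen : ∀ g ∈ G, g.length = ℓ) {k : ℕ}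
    (hk : k ≤ ℓ) {p : Set (List (Set α)) × ℕ} (hp : p ∈ LevelAux G ℓ (ℓ - k)) {s : List α} :
    s ∈ (levelNFA G ℓ).acceptsFrom {p} ↔ k + s.length = ℓ ∧ p = matchState G k s := by
  obtain ⟨t, -, rfl, hne⟩ := (mem_levelAux_iff hG hlen hk).1 hp
  induction s generalizing k t with
  | nil =>
    simp only [NFA.nil_mem_acceptsFrom, mem_singleton_iff, exists_eq_left, List.length_nil,
      add_zero]
    constructor
    · intro hacc
      obtain rfl : k = ℓ := congrArg Prod.snd hacc
      exact ⟨rfl, hacc.trans (matchState_nil hlen).symm⟩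
    · rintro ⟨rfl, hts⟩
      exact hts.trans (matchState_nil hlen)
  | cons a s ih =>
    rw [NFA.cons_mem_acceptsFrom, NFA.stepSet_singleton, NFA.mem_acceptsFrom_iff_exists]
    constructor
    · rintro ⟨q, ⟨hkℓ, hq, hpar⟩, hs⟩
      change k + 1 ≤ ℓ at hkℓ
      change q ∈ LevelAux G ℓ (ℓ - (k + 1)) at hq
      obtain ⟨u, -, rfl, hqne⟩ := (mem_levelAux_iff hG hlen hkℓ).1 hq
      obtain ⟨hsℓ, hus⟩ := (ih hkℓ u hq hqne).1 hs
      refine ⟨by simp; omega, ?_⟩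
      rw [← hpar, hus, parent_matchState]
    · rintro ⟨hsℓ, hts⟩
      replace hsℓ : k + 1 + s.length = ℓ := by simp at hsℓ; omega
      have hkℓ : k + 1 ≤ ℓ := by omega
      have hsne : (matchState G (k + 1) s).1.Nonempty := by
        rw [hts, ← parent_matchState] at hne
        exact hne.mono (parent_fst_subset _ _)
      have hq : matchState G (k + 1) s ∈ LevelAux G ℓ (ℓ - (k + 1)) :=
        (mem_levelAux_iff hG hlen hkℓ).2 ⟨s, hsℓ, rfl, hsne⟩
      refine ⟨_, ⟨hkℓ, hq, ?_⟩, (ih hkℓ s hq hsne).2 ⟨hsℓ, rfl⟩⟩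
      rw [hts, parent_matchState]

end LevelNFA

theorem levelNFA_accepts_general {α : Type} (G : Set (List (Set α))) (ℓ : ℕ)
    (hG : G.Nonempty)
    (hlen : ∀ g ∈ G, g.length = ℓ) :
    ∀ s : List α, s ∈ (levelNFA G ℓ).accepts ↔ ∃ g ∈ G, List.Forall₂ (· ∈ ·) s g := by
  intro s
  have hstart : (levelNFA G ℓ).start = LevelAux G ℓ (ℓ - 0) := rfl
  rw [NFA.accepts_eq_acceptsFrom_start, NFA.mem_acceptsFrom_iff_exists, hstart]
  constructor
  · rintro ⟨p, hp, hs⟩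
    obtain ⟨-, rfl⟩ := (mem_acceptsFrom_levelNFA_iff hG hlen (Nat.zero_le ℓ) hp).1 hs
    obtain ⟨-, -, -, g, hg, hgs⟩ := (mem_levelAux_iff hG hlen (Nat.zero_le ℓ)).1 hp
    exact ⟨g, hg, by simpa using hgs⟩
  · rintro ⟨g, hg, hgs⟩
    have hsℓ : s.length = ℓ := hgs.length_eq.trans (hlen g hg)
    have hp : matchState G 0 s ∈ LevelAux G ℓ (ℓ - 0) :=
      (mem_levelAux_iff hG hlen (Nat.zero_le ℓ)).2 ⟨s, by omega, rfl, g, hg, by simpa using hgs⟩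
    exact ⟨_, hp, (mem_acceptsFrom_levelNFA_iff hG hlen (Nat.zero_le ℓ) hp).2 ⟨by omega, rfl⟩⟩

/-- The level-wise NFA built from a finite nonempty set of generalized strings of
equal length `ℓ` accepts a string `s` iff `s` matches some `g ∈ G`. -/
theorem levelNFA_accepts {α : Type} (G : Set (List (Set α))) (ℓ : ℕ)
    (hfin : G.Finite) (hG : G.Nonempty)
    (hlen : ∀ g ∈ G, g.length = ℓ)
    (hne : ∀ g ∈ G, ∀ S ∈ g, S.Nonempty) :
    ∀ s : List α, s ∈ (levelNFA G ℓ).accepts ↔ ∃ g ∈ G, List.Forall₂ (· ∈ ·) s g :=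
  levelNFA_accepts_general G ℓ hG hlen
end

section
/- Let G be a finite set of generalized strings of equal length ℓ. The level-wise NFA constructed from G is a simple NFA: all states are accessible, each state's language is non-empty, and languages of distinct states are pairwise disjoint. -/
/-!
Every transition into a state `q` on a letter `a` starts at `Parent q a`, and `(G, ℓ)` is the
only accepting state, so a word can be accepted only from the state reached by following
`Parent` backwards along it from `(G, ℓ)`: state languages are disjoint. Each state of a level
is by construction a parent of a state one level further down and steps into it, which gives
nonempty languages by induction towards `(G, ℓ)`. Because every letter set of every string in
`G` is nonempty, each state outside the top level has a nonempty parent, from which it is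
entered; induction towards the top level gives accessibility.
-/

open List Set

section StateLang

variable {α σ : Type} {M : NFA α σ}

theorem nil_mem_stateLang {q : σ} : [] ∈ stateLang M q ↔ q ∈ M.accept := by
  simp [stateLang]

theorem cons_mem_stateLang {q : σ} {a : α} {s : List α} :
    a :: s ∈ stateLang M q ↔ ∃ q' ∈ M.step q a, s ∈ stateLang M q' := by
  simp only [stateLang, Set.mem_ofPred_eq, NFA.evalFrom_cons, NFA.stepSet_singleton]
  rw [NFA.evalFrom_eq_biUnion_singleton]
  simp only [Set.Nonempty, Set.mem_inter_iff, Set.mem_iUnion₂, exists_prop]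
  grind

theorem Accessible.of_mem_step {p q : σ} {a : α} (hp : Accessible M p) (h : q ∈ M.step p a) :
    Accessible M q := by
  obtain ⟨s, hs⟩ := hp
  exact ⟨s ++ [a], by rw [NFA.eval_append_singleton, NFA.mem_stepSet]; exact ⟨p, hs, h⟩⟩

theorem eq_foldr_of_mem_stateLang {f : σ} {pred : σ → α → σ} (hacc : M.accept ⊆ {f})
    (hpred : ∀ q a q', q' ∈ M.step q a → q = pred q' a) :
    ∀ {s : List α} {q : σ}, s ∈ stateLang M q → q = s.foldr (fun a q => pred q a) f
  | [], _, h => hacc (nil_mem_stateLang.1 h)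
  | a :: _, _, h => by
    obtain ⟨q', hq', hs⟩ := cons_mem_stateLang.1 h
    rw [hpred _ _ _ hq', eq_foldr_of_mem_stateLang hacc hpred hs, List.foldr_cons]

theorem disjoint_stateLang {f : σ} {pred : σ → α → σ} (hacc : M.accept ⊆ {f})
    (hpred : ∀ q a q', q' ∈ M.step q a → q = pred q' a) {p q : σ} (hpq : p ≠ q) :
    Disjoint (stateLang M p) (stateLang M q) :=
  Set.disjoint_left.2 fun _ hp hq =>
    hpq ((eq_foldr_of_mem_stateLang hacc hpred hp).trans
      (eq_foldr_of_mem_stateLang hacc hpred hq).symm)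

end StateLang

section LevelNFA

variable {α : Type} {G : Set (List (Set α))} {ℓ : ℕ}

theorem snd_eq_of_mem_levelAux :
    ∀ {j : ℕ} {q : Set (List (Set α)) × ℕ}, q ∈ LevelAux G ℓ j → q.2 = ℓ - j
  | 0, _, rfl => rfl
  | _ + 1, _, ⟨_, _, hq, _, rfl⟩ => by
    simp [Parent, snd_eq_of_mem_levelAux hq, Nat.sub_sub]

theorem fst_subset_of_mem_levelAux :
    ∀ {j : ℕ} {q : Set (List (Set α)) × ℕ}, q ∈ LevelAux G ℓ j → q.1 ⊆ G
  | 0, _, rfl => subset_rfl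
  | _ + 1, _, ⟨_, _, hq, _, rfl⟩ => fun _ hh => fst_subset_of_mem_levelAux hq hh.1

theorem fst_nonempty_of_mem_levelAux (hG : G.Nonempty) :
    ∀ {j : ℕ} {q : Set (List (Set α)) × ℕ}, q ∈ LevelAux G ℓ j → q.1.Nonempty
  | 0, _, rfl => hG
  | _ + 1, _, hq => hq.1

theorem eq_parent_of_mem_step {p q : Set (List (Set α)) × ℕ} {a : α}
    (h : q ∈ (levelNFA G ℓ).step p a) : p = Parent q a :=
  h.2.2.symm

theorem mem_step_parent {j : ℕ} {q : Set (List (Set α)) × ℕ} (hq : q ∈ LevelAux G ℓ j)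
    (hj : j < ℓ) (a : α) : q ∈ (levelNFA G ℓ).step (Parent q a) a := by
  have hq2 := snd_eq_of_mem_levelAux hq
  refine ⟨?_, ?_, rfl⟩
  · simp only [Parent]
    omega
  · rwa [show ℓ - ((Parent q a).2 + 1) = j by simp only [Parent]; omega]

theorem exists_parent_nonempty (hG : G.Nonempty) (hlen : ∀ g ∈ G, g.length = ℓ)
    (hne : ∀ g ∈ G, ∀ S ∈ g, S.Nonempty) {j : ℕ} {q : Set (List (Set α)) × ℕ}
    (hq : q ∈ LevelAux G ℓ j) (hj : j < ℓ) : ∃ a, (Parent q a).1.Nonempty := by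
  obtain ⟨h, hh⟩ := fst_nonempty_of_mem_levelAux hG hq
  have hhG := fst_subset_of_mem_levelAux hq hh
  have hk : q.2 - 1 < h.length := by rw [snd_eq_of_mem_levelAux hq, hlen h hhG]; omega
  obtain ⟨a, ha⟩ := hne h hhG _ (List.getElem_mem hk)
  exact ⟨a, h, hh, by rwa [List.getD_eq_getElem h ∅ hk]⟩

theorem stateLang_levelNFA_nonempty :
    ∀ {j : ℕ}, j ≤ ℓ → ∀ {q : Set (List (Set α)) × ℕ}, q ∈ LevelAux G ℓ j →
      (stateLang (levelNFA G ℓ) q).Nonempty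
  | 0, _, _, rfl => ⟨[], nil_mem_stateLang.2 rfl⟩
  | _ + 1, hj, _, ⟨_, _, hq, a, rfl⟩ => by
    obtain ⟨s, hs⟩ := stateLang_levelNFA_nonempty (by omega) hq
    exact ⟨a :: s, cons_mem_stateLang.2 ⟨_, mem_step_parent hq (by omega) a, hs⟩⟩

theorem accessible_levelNFA (hG : G.Nonempty) (hlen : ∀ g ∈ G, g.length = ℓ)
    (hne : ∀ g ∈ G, ∀ S ∈ g, S.Nonempty) {j : ℕ} (hj : j ≤ ℓ)
    {q : Set (List (Set α)) × ℕ} (hq : q ∈ LevelAux G ℓ j) : Accessible (levelNFA G ℓ) q := by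
  induction hd : ℓ - j generalizing j q with
  | zero =>
    obtain rfl : j = ℓ := by omega
    exact ⟨[], hq⟩
  | succ d ih =>
    obtain ⟨a, ha⟩ := exists_parent_nonempty hG hlen hne hq (by omega)
    have hparent : Parent q a ∈ LevelAux G ℓ (j + 1) := ⟨ha, q, hq, a, rfl⟩
    exact (ih (by omega) hparent (by omega)).of_mem_step (mem_step_parent hq (by omega) a)

end LevelNFA

theorem levelNFA_simple_general {α : Type} (G : Set (List (Set α))) (ℓ : ℕ)
    (hG : G.Nonempty)
    (hlen : ∀ g ∈ G, g.length = ℓ)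
    (hne : ∀ g ∈ G, ∀ S ∈ g, S.Nonempty) :
    (∀ q ∈ ⋃ j ≤ ℓ, LevelAux G ℓ j, Accessible (levelNFA G ℓ) q) ∧
    (∀ q ∈ ⋃ j ≤ ℓ, LevelAux G ℓ j, (stateLang (levelNFA G ℓ) q).Nonempty) ∧
    (∀ p ∈ ⋃ j ≤ ℓ, LevelAux G ℓ j, ∀ q ∈ ⋃ j ≤ ℓ, LevelAux G ℓ j, p ≠ q →
      Disjoint (stateLang (levelNFA G ℓ) p) (stateLang (levelNFA G ℓ) q)) := by
  refine ⟨fun q hq => ?_, fun q hq => ?_, fun p _ q _ hpq => ?_⟩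
  · obtain ⟨j, hj, hq⟩ := Set.mem_iUnion₂.1 hq
    exact accessible_levelNFA hG hlen hne hj hq
  · obtain ⟨j, hj, hq⟩ := Set.mem_iUnion₂.1 hq
    exact stateLang_levelNFA_nonempty hj hq
  · exact disjoint_stateLang subset_rfl (fun _ _ _ => eq_parent_of_mem_step) hpq

/-- The level-wise NFA built from a finite nonempty set of generalized strings of
equal length is a simple NFA: on its state space (the union of the levels), all
states are accessible, all state languages are nonempty, and the languages of
distinct states are pairwise disjoint. -/
theorem levelNFA_simple {α : Type} (G : Set (List (Set α))) (ℓ : ℕ)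
    (hfin : G.Finite) (hG : G.Nonempty)
    (hlen : ∀ g ∈ G, g.length = ℓ)
    (hne : ∀ g ∈ G, ∀ S ∈ g, S.Nonempty) :
    (∀ q ∈ ⋃ j ≤ ℓ, LevelAux G ℓ j, Accessible (levelNFA G ℓ) q) ∧
    (∀ q ∈ ⋃ j ≤ ℓ, LevelAux G ℓ j, (stateLang (levelNFA G ℓ) q).Nonempty) ∧
    (∀ p ∈ ⋃ j ≤ ℓ, LevelAux G ℓ j, ∀ q ∈ ⋃ j ≤ ℓ, LevelAux G ℓ j, p ≠ q →
      Disjoint (stateLang (levelNFA G ℓ) p) (stateLang (levelNFA G ℓ) q)) :=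
  levelNFA_simple_general G ℓ hG hlen hne
end

section
/- Let g be a generalized string and d_max ∈ ℕ. The Hamming-neighborhood NFA built from (g, d_max) accepts exactly the strings s of length |g| with Hamming distance d(s, g) ≤ d_max. -/
open List Set

/-- Hamming distance between a string `s` and a generalized string `h` of the same
length: the number of positions `i` with `s[i] ∉ h[i]`. -/
noncomputable def hamDist {α : Type} (s : List α) (h : List (Set α)) : ℕ :=
  Nat.card {i : Fin s.length // s.get i ∉ h.getD (i : ℕ) ∅}

/-- The state space of the Hamming-neighborhood NFA for `(g, d)`:
pairs `(e, k)` with `0 ≤ e ≤ d`, `0 ≤ k ≤ |g|` and `|g| - k - e ≥ 0`. -/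
def hamQ {α : Type} (g : List (Set α)) (d : ℕ) : Set (ℕ × ℕ) :=
  {p | p.1 ≤ d ∧ p.2 ≤ g.length ∧ p.1 + p.2 ≤ g.length}

/-- The Hamming-neighborhood NFA for a generalized string `g` and threshold `d`:
from `(e, k)` reading a matching character leads to `(e, k+1)`, a mismatching one to
`(e-1, k+1)`, clipped to the state space; start states `(e, 0)`, accepting state
`(0, |g|)`. -/
def hamNFA {α : Type} (g : List (Set α)) (d : ℕ) : NFA α (ℕ × ℕ) where
  step p a := {q ∈ hamQ g d |
      (a ∈ g.getD p.2 ∅ ∧ q = (p.1, p.2 + 1)) ∨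
      (a ∉ g.getD p.2 ∅ ∧ 0 < p.1 ∧ q = (p.1 - 1, p.2 + 1))}
  start := {p ∈ hamQ g d | p.2 = 0}
  accept := {(0, g.length)}

/-!
Reading a character moves the automaton one column to the right and spends one unit of the
error budget exactly when the character mismatches. Hence the set of states reached on `s` is a
whole layer: all states `(e, |s|)` with `e + d(s, g) ≤ d` (and `e + |s| ≤ |g|`). The accepting
state `(0, |g|)` lies in it iff `|s| = |g|` and `d(s, g) ≤ d`.
-/

section

variable {α : Type}

theorem hamDist_nil (g : List (Set α)) : hamDist [] g = 0 := by
  simp [hamDist]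

open scoped Classical in
theorem hamDist_cons (a : α) (s : List α) (g : List (Set α)) :
    hamDist (a :: s) g = (if a ∈ g.getD 0 ∅ then 0 else 1) + hamDist s g.tail := by
  simp only [hamDist, Nat.card_eq_fintype_card, Fintype.card_subtype]
  exact (Fin.card_filter_univ_succ' (n := s.length) _).trans (by simp [ite_not])

/-- The states reached after reading `k` characters with `m` mismatches. -/
def hamLayer (g : List (Set α)) (d k m : ℕ) : Set (ℕ × ℕ) :=
  {p | p.2 = k ∧ p.1 + m ≤ d ∧ p.1 + p.2 ≤ g.length}

open scoped Classical in
theorem stepSet_hamLayer (g : List (Set α)) (d k m : ℕ) (a : α) :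
    (hamNFA g d).stepSet (hamLayer g d k m) a =
      hamLayer g d (k + 1) (m + if a ∈ g.getD k ∅ then 0 else 1) := by
  ext ⟨e, j⟩
  simp only [NFA.mem_stepSet, hamNFA, hamLayer, hamQ, Set.mem_ofPred_eq,
    Prod.exists, Prod.mk.injEq]
  by_cases ha : a ∈ g.getD k ∅
  · simp only [ha, if_true]
    constructor
    · rintro ⟨e', k', ⟨rfl, hm, -⟩, ⟨-, -, hlen⟩, ⟨-, rfl, rfl⟩ | ⟨hna, -⟩⟩
      · omega
      · exact absurd ha hna
    · rintro ⟨rfl, hm, hlen⟩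
      exact ⟨e, k, ⟨rfl, by omega, by omega⟩, ⟨by omega, by omega, hlen⟩, .inl ⟨ha, rfl, rfl⟩⟩
  · simp only [ha, if_false]
    constructor
    · rintro ⟨e', k', ⟨rfl, hm, -⟩, ⟨-, -, hlen⟩, ⟨ha', -⟩ | ⟨-, hpos, rfl, rfl⟩⟩
      · exact absurd ha' ha
      · omega
    · rintro ⟨rfl, hm, hlen⟩
      exact ⟨e + 1, k, ⟨rfl, by omega, by omega⟩, ⟨by omega, by omega, hlen⟩,
        .inr ⟨ha, by omega, by omega, rfl⟩⟩

theorem evalFrom_hamLayer (g : List (Set α)) (d : ℕ) (s : List α) (k m : ℕ) :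
    (hamNFA g d).evalFrom (hamLayer g d k m) s =
      hamLayer g d (k + s.length) (m + hamDist s (g.drop k)) := by
  induction s generalizing k m with
  | nil => simp [hamDist_nil]
  | cons a s ih =>
    have head_drop : (g.drop k).getD 0 ∅ = g.getD k ∅ := by simp
    rw [NFA.evalFrom_cons, stepSet_hamLayer, ih, hamDist_cons, head_drop, List.tail_drop,
      List.length_cons]
    congr 1 <;> omega

theorem start_hamNFA (g : List (Set α)) (d : ℕ) : (hamNFA g d).start = hamLayer g d 0 0 := by
  ext ⟨e, j⟩
  simp only [hamNFA, hamQ, hamLayer, Set.mem_ofPred_eq]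
  omega

end

theorem hamNFA_accepts_general {α : Type} (g : List (Set α)) (d : ℕ) :
    ∀ s : List α, s ∈ (hamNFA g d).accepts ↔ s.length = g.length ∧ hamDist s g ≤ d := by
  intro s
  rw [NFA.mem_accepts, start_hamNFA, evalFrom_hamLayer]
  simp only [hamNFA, Set.mem_singleton_iff, exists_eq_left, hamLayer, Set.mem_ofPred_eq,
    zero_add, List.drop_zero]
  omega

/-- The Hamming-neighborhood NFA for `(g, d)` accepts exactly the strings of length
`|g|` whose Hamming distance to `g` is at most `d`. -/
theorem hamNFA_accepts {α : Type} (g : List (Set α)) (d : ℕ)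
    (hne : ∀ S ∈ g, S.Nonempty) :
    ∀ s : List α, s ∈ (hamNFA g d).accepts ↔ s.length = g.length ∧ hamDist s g ≤ d :=
  hamNFA_accepts_general g d
end

section
/- For an NFA M and the automaton M_⟲ obtained by adding self-transitions on every character to all start states, a string s is accepted by M_⟲ if and only if some suffix of s is accepted by M. Consequently, if M accepts exactly the strings matching a pattern, M_⟲ accepts exactly the strings having a suffix matching the pattern. -/
open List Set

/-! A run of `loopNFA M` may idle in a start state and afterwards only follows transitions of `M`,
so the states it reaches on `s` are exactly those `M` reaches on suffixes of `s`; this is proved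
by induction on `s` from the right, using that `t <:+ s ++ [a]` means `t = []` or `t = t' ++ [a]`
with `t' <:+ s`. -/

theorem mem_eval_loopNFA_iff {α σ : Type} (M : NFA α σ) (s : List α) (q : σ) :
    q ∈ (loopNFA M).eval s ↔ ∃ t, t <:+ s ∧ q ∈ M.eval t := by
  induction s using List.reverseRecOn generalizing q with
  | nil => simp [loopNFA]
  | append_singleton s a ih =>
    simp only [NFA.eval_append_singleton, NFA.mem_stepSet, List.suffix_concat_iff]
    constructor
    · rintro ⟨p, hp, ⟨rfl, hstart⟩ | hstep⟩
      · exact ⟨[], Or.inl rfl, hstart⟩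
      · obtain ⟨t, hts, hpt⟩ := (ih p).1 hp
        exact ⟨t ++ [a], Or.inr ⟨t, rfl, hts⟩, by
          rw [NFA.eval_append_singleton]; exact M.mem_stepSet.2 ⟨p, hpt, hstep⟩⟩
    · rintro ⟨t, rfl | ⟨t, rfl, hts⟩, hqt⟩
      · exact ⟨q, (ih q).2 ⟨[], List.nil_suffix, hqt⟩, Or.inl ⟨rfl, hqt⟩⟩
      · rw [NFA.eval_append_singleton, NFA.mem_stepSet] at hqt
        obtain ⟨p, hpt, hstep⟩ := hqt
        exact ⟨p, (ih p).2 ⟨t, hts, hpt⟩, Or.inr hstep⟩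

theorem loopNFA_accepts_iff_suffix_general {α σ : Type} (M : NFA α σ) :
    ∀ s : List α, s ∈ (loopNFA M).accepts ↔ ∃ t : List α, t <:+ s ∧ t ∈ M.accepts := by
  intro s
  change (∃ q ∈ M.accept, q ∈ (loopNFA M).eval s) ↔ ∃ t, t <:+ s ∧ ∃ q ∈ M.accept, q ∈ M.eval t
  simp only [mem_eval_loopNFA_iff]
  exact ⟨fun ⟨q, hq, t, hts, hqt⟩ => ⟨t, hts, q, hq, hqt⟩,
    fun ⟨t, hts, q, hq, hqt⟩ => ⟨q, hq, t, hts, hqt⟩⟩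

/-- If no start state of `M` has an incoming transition from any state, then the
automaton obtained by adding self-transitions to all start states accepts a string
`s` iff `M` accepts some suffix of `s`. -/
theorem loopNFA_accepts_iff_suffix {α σ : Type} (M : NFA α σ)
    (h : ∀ (q : σ) (a : α), ∀ p ∈ M.start, p ∉ M.step q a) :
    ∀ s : List α, s ∈ (loopNFA M).accepts ↔ ∃ t : List α, t <:+ s ∧ t ∈ M.accepts :=
  loopNFA_accepts_iff_suffix_general M
end

section
/- If two NFA states p and q of a simple NFA both transition (on the same character σ) into sets of states containing a common state r, and within each level languages of distinct states are disjoint, then in the level-wise generalized-string NFA p = q; more generally, in any NFA where each state has at most one parent per character, for any two distinct states p, q in the same level and any string s, the sets of accepting runs from p and q on s are disjoint, hence L(p) ∩ L(q) = ∅ whenever the unique accepting-path property holds at the next level. -/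
open List Set

theorem mem_stateLang_iff_mem_acceptsFrom {α σ : Type} (M : NFA α σ) (q : σ) (s : List α) :
    s ∈ stateLang M q ↔ s ∈ M.acceptsFrom {q} := by
  simp only [stateLang, NFA.mem_acceptsFrom, Set.mem_ofPred_eq, Set.Nonempty, Set.mem_inter_iff,
    and_comm]

theorem nil_mem_stateLang_iff {α σ : Type} (M : NFA α σ) (q : σ) :
    [] ∈ stateLang M q ↔ q ∈ M.accept := by
  simp [mem_stateLang_iff_mem_acceptsFrom]

theorem cons_mem_stateLang_iff {α σ : Type} (M : NFA α σ) (q : σ) (a : α) (s : List α) :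
    a :: s ∈ stateLang M q ↔ ∃ r ∈ M.step q a, s ∈ stateLang M r := by
  simp only [mem_stateLang_iff_mem_acceptsFrom]
  rw [NFA.cons_mem_acceptsFrom, NFA.stepSet_singleton, NFA.mem_acceptsFrom,
    NFA.evalFrom_eq_biUnion_singleton]
  simp only [Set.mem_iUnion₂, NFA.mem_acceptsFrom]
  tauto

theorem disjoint_stateLang_of_disjoint_step {α σ : Type} (M : NFA α σ) {p q : σ}
    (hacc : ¬(p ∈ M.accept ∧ q ∈ M.accept))
    (hsucc : ∀ (a : α), ∀ r ∈ M.step p a, ∀ r' ∈ M.step q a,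
      Disjoint (stateLang M r) (stateLang M r')) :
    Disjoint (stateLang M p) (stateLang M q) := by
  rw [Set.disjoint_left]
  rintro (_ | ⟨a, s⟩) hp hq
  · exact hacc ⟨(nil_mem_stateLang_iff M p).1 hp, (nil_mem_stateLang_iff M q).1 hq⟩
  · obtain ⟨r, hr, hrs⟩ := (cons_mem_stateLang_iff M p a s).1 hp
    obtain ⟨r', hr', hrs'⟩ := (cons_mem_stateLang_iff M q a s).1 hq
    exact Set.disjoint_left.1 (hsucc a r hr r' hr') hrs hrs'

theorem levelwise_disjoint_step_general {α σ : Type} (M : NFA α σ) (lvl : σ → ℕ)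
    (i : ℕ) (f : σ)
    (hstep : ∀ (p : σ) (a : α), ∀ q ∈ M.step p a, lvl q = lvl p + 1)
    (haccept : M.accept = {f})
    (ha : ∀ p q : σ, lvl p = i → lvl q = i → ∀ (a : α) (r : σ),
      r ∈ M.step p a → r ∈ M.step q a → p = q)
    (hb : ∀ p q : σ, lvl p = i + 1 → lvl q = i + 1 → p ≠ q →
      Disjoint (stateLang M p) (stateLang M q)) :
    ∀ p q : σ, lvl p = i → lvl q = i → p ≠ q →
      Disjoint (stateLang M p) (stateLang M q) := by
  intro p q hp hq hpq
  refine disjoint_stateLang_of_disjoint_step M ?_ fun a r hr r' hr' => ?_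
  · rw [haccept]
    rintro ⟨rfl, rfl⟩
    exact hpq rfl
  · rcases eq_or_ne r r' with rfl | hne
    · exact absurd (ha p q hp hq a r hr hr') hpq
    · exact hb r r' (by rw [hstep p a r hr, hp]) (by rw [hstep q a r' hr', hq]) hne

/-- In a level-organized NFA (every transition increases the level by one, single
accepting state), if each state of level `i + 1` has at most one parent per
character among the states of level `i`, and the languages of distinct states of
level `i + 1` are disjoint, then the languages of distinct states of level `i` are
disjoint. -/
theorem levelwise_disjoint_step {α σ : Type} (M : NFA α σ) (lvl : σ → ℕ)
    (ℓ i : ℕ) (f : σ)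
    (hstep : ∀ (p : σ) (a : α), ∀ q ∈ M.step p a, lvl q = lvl p + 1)
    (haccept : M.accept = {f}) (hf : lvl f = ℓ)
    (ha : ∀ p q : σ, lvl p = i → lvl q = i → ∀ (a : α) (r : σ),
      r ∈ M.step p a → r ∈ M.step q a → p = q)
    (hb : ∀ p q : σ, lvl p = i + 1 → lvl q = i + 1 → p ≠ q →
      Disjoint (stateLang M p) (stateLang M q)) :
    ∀ p q : σ, lvl p = i → lvl q = i → p ≠ q →
      Disjoint (stateLang M p) (stateLang M q) :=
  levelwise_disjoint_step_general M lvl i f hstep haccept ha hb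
end
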